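/- For every cyclic sentence S over {A, X, B}, the value |S| computed in the original puzzle equals the value |S| computed in the tight puzzle. (In particular, establishing the reversal symmetry |S| = |S̄| for the tight puzzle is equivalent to establishing it for the original puzzle.) -/

import Mathlib

/-!
The "tight puzzle" of Schwartz–Tabachnikov.  Strings over the alphabet `{A, X, B}`;
word list (coefficient, weight): `X (1,0)`, `XA (1,1)`, `XAA (1,1)`, `AXA (2,1)`,
`AAA (-1,1)`, `BA (-1,1)`, `ABA (-1,1)`, `XXA (-1,1)`; in a parsing the word `X` may
never be immediately followed by the word `XA` or the word `BA`.
-/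

open scoped Classical

/-- The three-letter alphabet. -/
inductive PLetter | A | X | B
deriving DecidableEq

/-- Strings over the alphabet. -/
abbrev PWord := List PLetter

/-- The tight puzzle word list. -/
def tightWords : List PWord :=
  [[PLetter.X], [PLetter.X, PLetter.A], [PLetter.X, PLetter.A, PLetter.A],
   [PLetter.A, PLetter.X, PLetter.A], [PLetter.A, PLetter.A, PLetter.A],
   [PLetter.B, PLetter.A], [PLetter.A, PLetter.B, PLetter.A],
   [PLetter.X, PLetter.X, PLetter.A]]

/-- Coefficients of the words of the tight puzzle (`AXA ↦ 2`; `AAA, BA, ABA, XXA ↦ -1`;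
`X, XA, XAA ↦ 1`). -/
def tightCoeff (w : PWord) : ℤ :=
  if w = [PLetter.A, PLetter.X, PLetter.A] then 2
  else if w = [PLetter.A, PLetter.A, PLetter.A] ∨ w = [PLetter.B, PLetter.A] ∨
      w = [PLetter.A, PLetter.B, PLetter.A] ∨ w = [PLetter.X, PLetter.X, PLetter.A] then -1
  else 1

/-- Weights of the words: the word `X` has weight `0`, all other words weight `1`. -/
def wordWt (w : PWord) : ℕ := if w = [PLetter.X] then 0 else 1

/-- The forbidden adjacency: the word `X` immediately followed by `XA` or `BA`. -/
def Bad (u v : PWord) : Prop :=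
  u = [PLetter.X] ∧ (v = [PLetter.X, PLetter.A] ∨ v = [PLetter.B, PLetter.A])

/-- The contribution `coefficient · t^weight ∈ ℤ[t]` of a parsing `L`. -/
noncomputable def parseVal (c : PWord → ℤ) (L : List PWord) : Polynomial ℤ :=
  Polynomial.C ((L.map c).prod) * Polynomial.X ^ ((L.map wordWt).sum)

/-- `L` is a parsing in the tight puzzle: all its words are on the word list and the
forbidden adjacency never occurs. -/
def TightChain (L : List PWord) : Prop :=
  (∀ w ∈ L, w ∈ tightWords) ∧ List.Chain' (fun u v => ¬ Bad u v) L

/-- The *core* of a string: what remains after deleting all leading and trailing `X`s. -/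
def core (s : PWord) : PWord :=
  ((s.dropWhile (· == PLetter.X)).reverse.dropWhile (· == PLetter.X)).reverse

/-- `L` is a parsing of the bi-infinite string `⋯XX·W·XX⋯` (with the infinitely many
padding `X`s parsed as copies of the word `X` and trimmed away): the words of `L`
concatenate to `W` up to padding by `X`s on either side, `L` neither starts nor ends
with the word `X`, and (because of the padding `X`-words on the left) the first word
of `L` is not `XA` or `BA`. -/
def IsOpenParsing (W : PWord) (L : List PWord) : Prop :=
  TightChain L ∧ core L.flatten = core W ∧
  ∀ h : L ≠ [],
    L.head h ≠ [PLetter.X] ∧ L.head h ≠ [PLetter.X, PLetter.A] ∧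
    L.head h ≠ [PLetter.B, PLetter.A] ∧ L.getLast h ≠ [PLetter.X]

/-- `(r, L)` is a parsing of the cyclic string `(W)`: reading the necklace of the
letters of `W` starting at position `r`, the words of `L` concatenate to it, the
forbidden adjacency does not occur (cyclically), and `r < (last word).length`
(so that every parsing of the necklace is counted exactly once). -/
def IsCyclicParsing (W : PWord) (r : ℕ) (L : List PWord) : Prop :=
  TightChain L ∧
  ∃ h : L ≠ [], L.flatten = W.rotate r ∧ r < (L.getLast h).length ∧
    ¬ Bad (L.getLast h) (L.head h)

/-- `L` is a parsing of the locked string `[W]`: the words of `L` concatenate exactly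
to `W`, no padding allowed. -/
def IsLockedParsing (W : PWord) (L : List PWord) : Prop :=
  TightChain L ∧ L.flatten = W

/-- The nine words of both puzzles, as a function (used to enumerate parsings). -/
def wordOf : Fin 9 → PWord :=
  ![[PLetter.X], [PLetter.X, PLetter.A], [PLetter.X, PLetter.A, PLetter.A],
    [PLetter.X, PLetter.B, PLetter.A], [PLetter.A, PLetter.X, PLetter.A],
    [PLetter.A, PLetter.A, PLetter.A], [PLetter.B, PLetter.A],
    [PLetter.A, PLetter.B, PLetter.A], [PLetter.X, PLetter.X, PLetter.A]]

/-- The open value `|W| ∈ ℤ[t]`: the sum of `coefficient · t^weight` over all parsings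
of the bi-infinite string `⋯XX·W·XX⋯` (any such parsing consists of at most
`W.length + 2` words). -/
noncomputable def openVal (W : PWord) : Polynomial ℤ :=
  ∑ k ∈ Finset.range (W.length + 3), ∑ f : Fin k → Fin 9,
    if IsOpenParsing W ((List.ofFn f).map wordOf) then
      parseVal tightCoeff ((List.ofFn f).map wordOf)
    else 0

/-- The cyclic value `|(W)| ∈ ℤ[t]`: the sum of `coefficient · t^weight` over all
parsings of the cyclic string `(W)`. -/
noncomputable def cycVal (W : PWord) : Polynomial ℤ :=
  ∑ r ∈ Finset.range W.length, ∑ k ∈ Finset.range (W.length + 1), ∑ f : Fin k → Fin 9,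
    if IsCyclicParsing W r ((List.ofFn f).map wordOf) then
      parseVal tightCoeff ((List.ofFn f).map wordOf)
    else 0

/-- The locked value `|[W]| ∈ ℤ[t]`: the sum of `coefficient · t^weight` over all
parsings whose concatenation is exactly `W`. -/
noncomputable def lockVal (W : PWord) : Polynomial ℤ :=
  ∑ k ∈ Finset.range (W.length + 1), ∑ f : Fin k → Fin 9,
    if IsLockedParsing W ((List.ofFn f).map wordOf) then
      parseVal tightCoeff ((List.ofFn f).map wordOf)
    else 0

/-- The original puzzle word list (the tight list together with `XBA`). -/
def origWords : List PWord :=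
  tightWords ++ [[PLetter.X, PLetter.B, PLetter.A]]

/-- Coefficients of the words of the original puzzle (`AXA ↦ 2`; `XXA ↦ -2`;
`AAA, BA, ABA ↦ -1`; `X, XA, XAA, XBA ↦ 1`). -/
def origCoeff (w : PWord) : ℤ :=
  if w = [PLetter.A, PLetter.X, PLetter.A] then 2
  else if w = [PLetter.X, PLetter.X, PLetter.A] then -2
  else if w = [PLetter.A, PLetter.A, PLetter.A] ∨ w = [PLetter.B, PLetter.A] ∨
      w = [PLetter.A, PLetter.B, PLetter.A] then -1
  else 1

/-- `(r, L)` is a parsing of the cyclic string `(W)` in the original puzzle (all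
parsings allowed, no adjacency restriction): reading the necklace of the letters of
`W` starting at position `r`, the words of `L` concatenate to it, and
`r < (last word).length` (so that every parsing of the necklace is counted exactly
once). -/
def IsOrigCyclicParsing (W : PWord) (r : ℕ) (L : List PWord) : Prop :=
  (∀ w ∈ L, w ∈ origWords) ∧
  ∃ h : L ≠ [], L.flatten = W.rotate r ∧ r < (L.getLast h).length

/-- The cyclic value `|(W)| ∈ ℤ[t]` in the original puzzle. -/
noncomputable def origCycVal (W : PWord) : Polynomial ℤ :=
  ∑ r ∈ Finset.range W.length, ∑ k ∈ Finset.range (W.length + 1), ∑ f : Fin k → Fin 9,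
    if IsOrigCyclicParsing W r ((List.ofFn f).map wordOf) then
      parseVal origCoeff ((List.ofFn f).map wordOf)
    else 0

/-!
Group each occurrence of the word `X` immediately followed, cyclically, by `XA` or `BA` with
its successor. The groups are disjoint, so a parsing of the original puzzle is the same thing
as a parsing into words of the original list in which the forbidden adjacency never occurs,
together with a choice, for each `XXA` and each `XBA`, of whether it is split into `X·XA`
resp. `X·BA`. Summing over these choices replaces the coefficient `-2` of `XXA` by
`-2 + 1 = -1` and the coefficient `1` of `XBA` by `1 - 1 = 0`, which leaves exactly the
tight puzzle.
-/

section Enumeration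

variable {ι β : Type*} [Fintype ι] [DecidableEq β]

def boundedLists (e : ι → β) (n : ℕ) : Finset (List β) :=
  ((Finset.range (n + 1)).sigma fun k => (Finset.univ : Finset (Fin k → ι))).image
    fun x => (List.ofFn x.2).map e

lemma mem_boundedLists {e : ι → β} {n : ℕ} {L : List β} :
    L ∈ boundedLists e n ↔ L.length ≤ n ∧ ∀ b ∈ L, b ∈ Set.range e := by
  simp only [boundedLists, Finset.mem_image, Finset.mem_sigma, Finset.mem_range,
    Finset.mem_univ, and_true, Sigma.exists]
  constructor
  · rintro ⟨k, f, hk, rfl⟩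
    simp only [List.length_map, List.length_ofFn, List.mem_map, List.mem_ofFn]
    exact ⟨by omega, by rintro _ ⟨_, ⟨i, rfl⟩, rfl⟩; exact ⟨f i, rfl⟩⟩
  · rintro ⟨hn, he⟩
    choose f hf using fun i : Fin L.length => he (L.get i) (List.get_mem L i)
    refine ⟨L.length, f, by omega, ?_⟩
    rw [List.map_ofFn]
    conv_rhs => rw [← List.ofFn_get L]
    exact congrArg List.ofFn (funext hf)

lemma sum_ofFn_eq_sum_boundedLists {M : Type*} [AddCommMonoid M] {e : ι → β}
    (he : e.Injective) (n : ℕ) (g : List β → M) :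
    ∑ k ∈ Finset.range (n + 1), ∑ f : Fin k → ι, g ((List.ofFn f).map e) =
      ∑ L ∈ boundedLists e n, g L := by
  rw [boundedLists, Finset.sum_image, Finset.sum_sigma]
  rintro ⟨k, f⟩ - ⟨k', f'⟩ - h
  exact List.ofFn_inj'.1 (List.map_injective_iff.2 he h)

end Enumeration

section ListPi

variable {α β : Type*} [DecidableEq β]

def listPi (B : α → Finset β) : List α → Finset (List β)
  | [] => {[]}
  | a :: l => (B a ×ˢ listPi B l).image fun p => p.1 :: p.2

lemma mem_listPi {B : α → Finset β} {l : List α} {G : List β} :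
    G ∈ listPi B l ↔ List.Forall₂ (fun b a => b ∈ B a) G l := by
  induction l generalizing G with
  | nil => simp [listPi]
  | cons a l ih => cases G <;> simp [listPi, ih]

lemma sum_listPi_prod {R : Type*} [CommSemiring R] (B : α → Finset β) (f : β → R) (l : List α) :
    ∑ G ∈ listPi B l, (G.map f).prod = (l.map fun a => ∑ b ∈ B a, f b).prod := by
  induction l with
  | nil => simp [listPi]
  | cons a l ih =>
    rw [listPi, Finset.sum_image (fun p _ q _ h => by simpa [Prod.ext_iff] using h),
      Finset.sum_product, List.map_cons, List.prod_cons, ← ih, Finset.sum_mul_sum]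
    simp

end ListPi

namespace List

variable {α : Type*}

lemma getLastD_flatten {G : List (List α)} (hG : ∀ b ∈ G, b ≠ []) (d : α) :
    G.flatten.getLastD d = (G.getLastD []).getLastD d := by
  rcases eq_nil_or_concat' G with rfl | ⟨G, b, rfl⟩
  · rfl
  · simp [getLastD_eq_getLast?, getLast?_append_of_ne_nil _ (hG b (by simp))]

lemma headD_flatten {G : List (List α)} (hG : ∀ b ∈ G, b ≠ []) (d : α) :
    G.flatten.headD d = (G.headD []).headD d := by
  cases G with
  | nil => rfl
  | cons b G => simp [head?_append_of_ne_nil _ (hG b (by simp))]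

lemma length_getLastD_le_length_flatten (G : List (List α)) :
    (G.getLastD []).length ≤ G.flatten.length := by
  cases G with
  | nil => simp
  | cons b G => exact (sublist_flatten_of_mem getLastD_mem_cons).length_le

lemma rotate_one_cons_concat (a b : α) (l : List α) :
    (a :: (l ++ [b])).rotate 1 = l ++ [b, a] := by
  rw [rotate_cons_succ, rotate_zero, append_assoc]; rfl

lemma getLastD_rotate_one (l : List α) (d : α) : (l.rotate 1).getLastD d = l.headD d := by
  cases l with
  | nil => rfl
  | cons a t => simp [rotate_cons_succ]

lemma flatten_rotate_one (G : List (List α)) :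
    (G.rotate 1).flatten = G.flatten.rotate (G.headD []).length := by
  cases G with
  | nil => simp
  | cons a t => simp [rotate_cons_succ, rotate_append_length_eq]

lemma eq_append_of_rotate_eq {l l₁ l₂ : List α} (h : l.rotate l₂.length = l₁ ++ l₂) :
    l = l₂ ++ l₁ :=
  rotate_injective l₂.length (by dsimp only; rw [h, rotate_append_length_eq])

end List

section ParseVal

variable (c : PWord → ℤ)

lemma parseVal_append (L L' : List PWord) :
    parseVal c (L ++ L') = parseVal c L * parseVal c L' := by
  simp only [parseVal, List.map_append, List.prod_append, List.sum_append, map_mul, pow_add]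
  ring

lemma parseVal_flatten (G : List (List PWord)) :
    parseVal c G.flatten = (G.map (parseVal c)).prod := by
  induction G with
  | nil => simp [parseVal]
  | cons b G ih => rw [List.flatten_cons, parseVal_append, ih, List.map_cons, List.prod_cons]

lemma parseVal_eq_prod (L : List PWord) :
    parseVal c L = (L.map fun w => parseVal c [w]).prod := by
  induction L with
  | nil => simp [parseVal]
  | cons w L ih =>
    rw [List.map_cons, List.prod_cons, ← ih, ← parseVal_append, List.singleton_append]

variable {c}

lemma List.Perm.parseVal_eq {L L' : List PWord} (h : L.Perm L') :
    parseVal c L = parseVal c L' := by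
  rw [parseVal, parseVal, (h.map c).prod_eq, (h.map wordWt).sum_eq]

end ParseVal

open PLetter

section Blocks

lemma ne_nil_of_mem_origWords {w : PWord} (hw : w ∈ origWords) : w ≠ [] := by
  revert w; decide

lemma mem_range_wordOf_of_mem_origWords {w : PWord} (hw : w ∈ origWords) :
    w ∈ Set.range wordOf := by
  revert w; decide

lemma wordOf_injective : wordOf.Injective := by decide

lemma Bad.length_right {u v : PWord} (h : Bad u v) : v.length = 2 := by
  rcases h with ⟨-, rfl | rfl⟩ <;> rfl

lemma Bad.right_ne_X {u v : PWord} (h : Bad u v) : v ≠ [X] := by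
  rcases h with ⟨-, rfl | rfl⟩ <;> simp

lemma Bad.not_bad_append {u v w : PWord} (h : Bad u v) : ¬ Bad (u ++ v) w := by
  rcases h with ⟨rfl, rfl | rfl⟩ <;> simp [Bad]

lemma not_bad_right_X {u : PWord} : ¬ Bad u [X] := by
  simp [Bad]

def IsBlock (b : List PWord) : Prop := (∃ w, b = [w]) ∨ ∃ u v, Bad u v ∧ b = [u, v]

lemma IsBlock.ne_nil {b : List PWord} (hb : IsBlock b) : b ≠ [] := by
  rcases hb with ⟨w, rfl⟩ | ⟨u, v, -, rfl⟩ <;> simp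

lemma IsBlock.flatten_mem_origWords {b : List PWord} (hb : IsBlock b)
    (hw : ∀ w ∈ b, w ∈ origWords) : b.flatten ∈ origWords := by
  rcases hb with ⟨w, rfl⟩ | ⟨u, v, ⟨rfl, rfl | rfl⟩, rfl⟩
  · simpa using hw
  all_goals decide

lemma IsBlock.mem_origWords {b : List PWord} (hb : IsBlock b) (hf : b.flatten ∈ origWords)
    {w : PWord} (hw : w ∈ b) : w ∈ origWords := by
  rcases hb with ⟨w, rfl⟩ | ⟨u, v, ⟨rfl, rfl | rfl⟩, rfl⟩
  · simpa [List.mem_singleton.1 hw] using hf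
  all_goals revert w; decide

lemma IsBlock.bad_flatten_iff {b₁ b₂ : List PWord} (h₁ : IsBlock b₁) (h₂ : IsBlock b₂) :
    Bad b₁.flatten b₂.flatten ↔ Bad (b₁.getLastD []) (b₂.headD []) := by
  rcases h₁ with ⟨w₁, rfl⟩ | ⟨u₁, v₁, hb₁, rfl⟩
  · rcases h₂ with ⟨w₂, rfl⟩ | ⟨u₂, v₂, ⟨rfl, hv₂⟩, rfl⟩
    · simp
    · rcases hv₂ with rfl | rfl <;> simp [Bad]
  · simp only [List.flatten_cons, List.flatten_nil, List.append_nil, hb₁.not_bad_append,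
      List.getLastD_cons, List.getLastD_nil, false_iff]
    exact fun h => hb₁.right_ne_X h.1

end Blocks

section Grouping

noncomputable def toBlocks : List PWord → List (List PWord)
  | [] => []
  | [u] => [[u]]
  | u :: v :: t => if Bad u v then [u, v] :: toBlocks t else [u] :: toBlocks (v :: t)

lemma flatten_toBlocks (L : List PWord) : (toBlocks L).flatten = L := by
  induction L using toBlocks.induct with
  | case1 => rfl
  | case2 u => rfl
  | case3 u v t h ih => simp [toBlocks, h, ih]
  | case4 u v t h ih => simp [toBlocks, h, ih]

lemma isBlock_of_mem_toBlocks {L : List PWord} {b : List PWord} (hb : b ∈ toBlocks L) :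
    IsBlock b := by
  induction L using toBlocks.induct with
  | case1 => simp [toBlocks] at hb
  | case2 u => simp only [toBlocks, List.mem_singleton] at hb; exact .inl ⟨u, hb⟩
  | case3 u v t h ih =>
    simp only [toBlocks, h, if_true, List.mem_cons] at hb
    exact hb.elim (fun hb => .inr ⟨u, v, h, hb⟩) ih
  | case4 u v t h ih =>
    simp only [toBlocks, h, if_false, List.mem_cons] at hb
    exact hb.elim (fun hb => .inl ⟨u, hb⟩) ih

lemma headD_headD_toBlocks (u : PWord) (t : List PWord) :
    ((toBlocks (u :: t)).headD []).headD [] = u := by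
  cases t with
  | nil => rfl
  | cons v t => by_cases h : Bad u v <;> simp [toBlocks, h]

lemma isChain_toBlocks (L : List PWord) :
    (toBlocks L).IsChain fun b₁ b₂ => ¬ Bad b₁.flatten b₂.flatten := by
  induction L using toBlocks.induct with
  | case1 => simp [toBlocks]
  | case2 u => simp [toBlocks]
  | case3 u v t h ih =>
    simp only [toBlocks, h, if_true, List.isChain_cons]
    exact ⟨fun _ _ => by simpa using h.not_bad_append, ih⟩
  | case4 u v t h ih =>
    simp only [toBlocks, h, if_false, List.isChain_cons]
    refine ⟨fun b hb hbad => h ?_, ih⟩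
    have hb' : (toBlocks (v :: t)).headD [] = b := by
      rw [List.headD_eq_head?, Option.mem_def.1 hb]; rfl
    rw [IsBlock.bad_flatten_iff (.inl ⟨u, rfl⟩)
      (isBlock_of_mem_toBlocks (List.mem_of_mem_head? hb)), ← hb',
      headD_headD_toBlocks] at hbad
    simpa using hbad

lemma toBlocks_flatten {G : List (List PWord)} (hG : ∀ b ∈ G, IsBlock b)
    (hc : G.IsChain fun b₁ b₂ => ¬ Bad b₁.flatten b₂.flatten) : toBlocks G.flatten = G := by
  induction G with
  | nil => rfl
  | cons b G ih =>
    rw [List.isChain_cons] at hc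
    have ih := ih (fun b' hb' => hG b' (List.mem_cons_of_mem _ hb')) hc.2
    rcases hG b List.mem_cons_self with ⟨u, rfl⟩ | ⟨u, v, huv, rfl⟩
    · cases G with
      | nil => rfl
      | cons b' G =>
        have hb' := hG b' (by simp)
        obtain ⟨v, s, rfl⟩ := List.exists_cons_of_ne_nil hb'.ne_nil
        have huv : ¬ Bad u v := fun huv =>
          hc.1 _ rfl ((IsBlock.bad_flatten_iff (.inl ⟨u, rfl⟩) hb').2 (by simpa using huv))
        simp only [List.flatten_cons, List.cons_append] at ih ⊢
        rw [List.nil_append, toBlocks, if_neg huv, ih]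
    · simp only [List.flatten_cons, List.cons_append, List.nil_append] at ih ⊢
      rw [toBlocks, if_pos huv, ih]

lemma toBlocks_append {l l' : List PWord} (h : ∀ u ∈ l.getLast?, ∀ v ∈ l'.head?, ¬ Bad u v) :
    toBlocks (l ++ l') = toBlocks l ++ toBlocks l' := by
  induction l using toBlocks.induct with
  | case1 => rfl
  | case2 u =>
    cases l' with
    | nil => rfl
    | cons v t => simp_all [toBlocks]
  | case3 u v t huv ih =>
    rw [List.cons_append, List.cons_append, toBlocks, if_pos huv, ih, toBlocks, if_pos huv]
    · rfl
    · intro x hx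
      cases t with
      | nil => simp at hx
      | cons => exact h x (by simpa using hx)
  | case4 u v t huv ih =>
    rw [List.cons_append, List.cons_append, toBlocks, if_neg huv, ← List.cons_append, ih,
      toBlocks, if_neg huv]
    · rfl
    · exact fun x hx => h x (by simpa using hx)

lemma toBlocks_append_bad {a : PWord} (t : List PWord) (ha : Bad [X] a) :
    toBlocks (t ++ [[X], a]) = toBlocks t ++ [[[X], a]] := by
  rw [toBlocks_append fun _ _ v hv => by
    obtain rfl : [X] = v := by simpa using hv
    exact not_bad_right_X]
  simp [toBlocks, ha]

lemma length_getLastD_le_length_getLastD_toBlocks (L : List PWord) :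
    (L.getLastD []).length ≤ (((toBlocks L).map List.flatten).getLastD []).length := by
  have hlast := List.getLastD_map (f := List.flatten) (l := toBlocks L) (a := [])
  rw [List.flatten_nil] at hlast
  conv_lhs => rw [← flatten_toBlocks L, List.getLastD_flatten fun b hb =>
    (isBlock_of_mem_toBlocks hb).ne_nil]
  rw [hlast]
  exact List.length_getLastD_le_length_flatten _

end Grouping

section CyclicParsings

variable {W : PWord} {r : ℕ}

def BadSeam (L : List PWord) : Prop := Bad (L.getLastD []) (L.headD [])

lemma isOrigCyclicParsing_iff {L : List PWord} :
    IsOrigCyclicParsing W r L ↔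
      (∀ w ∈ L, w ∈ origWords) ∧ L.flatten = W.rotate r ∧ r < (L.getLastD []).length := by
  cases L with
  | nil => simp [IsOrigCyclicParsing]
  | cons a t => simp only [IsOrigCyclicParsing, ne_eq, reduceCtorEq, not_false_eq_true,
      exists_true_left, List.getLast_eq_getLastD, List.getLastD_cons]

lemma isCyclicParsing_iff {L : List PWord} :
    IsCyclicParsing W r L ↔
      TightChain L ∧ L.flatten = W.rotate r ∧ r < (L.getLastD []).length ∧ ¬ BadSeam L := by
  cases L with
  | nil => simp [IsCyclicParsing]
  | cons a t => simp only [IsCyclicParsing, BadSeam, ne_eq, reduceCtorEq, not_false_eq_true,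
      exists_true_left, List.getLast_eq_getLastD, List.getLastD_cons, List.head_cons,
      List.headD_cons]

lemma badSeam_map_flatten_iff {G : List (List PWord)} (hG : ∀ b ∈ G, IsBlock b) :
    BadSeam (G.map List.flatten) ↔ BadSeam G.flatten := by
  cases G with
  | nil => rfl
  | cons b G =>
    have hne b (hb : b ∈ _) : b ≠ [] := (hG b hb).ne_nil
    have hlast := List.getLastD_map (f := List.flatten) (l := b :: G) (a := [])
    have hhead := List.headD_map (f := List.flatten) (l := b :: G) (a := [])
    rw [List.flatten_nil] at hlast hhead
    rw [BadSeam, BadSeam, List.getLastD_flatten hne, List.headD_flatten hne, hlast, hhead]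
    exact IsBlock.bad_flatten_iff (hG _ (by rw [List.getLastD_cons]; exact List.getLastD_mem_cons))
      (hG b List.mem_cons_self)

lemma IsOrigCyclicParsing.lt_length {L : List PWord} (h : IsOrigCyclicParsing W r L) :
    r < W.length := by
  obtain ⟨-, hflat, hr⟩ := isOrigCyclicParsing_iff.1 h
  have := List.length_getLastD_le_length_flatten L
  rw [hflat, List.length_rotate] at this
  omega

lemma IsOrigCyclicParsing.length_le {L : List PWord} (h : IsOrigCyclicParsing W r L) :
    L.length ≤ W.length := by
  obtain ⟨hw, hflat, -⟩ := isOrigCyclicParsing_iff.1 h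
  rw [← List.length_rotate W r, ← hflat, List.length_flatten]
  refine (List.length_map _).symm.le.trans (List.length_le_sum_of_one_le _ ?_)
  simp only [List.mem_map]
  rintro _ ⟨w, hw', rfl⟩
  exact List.length_pos_iff.2 (ne_nil_of_mem_origWords (hw w hw'))

lemma IsOrigCyclicParsing.mem_product {L : List PWord} (h : IsOrigCyclicParsing W r L) :
    (r, L) ∈ Finset.range W.length ×ˢ boundedLists wordOf W.length :=
  Finset.mem_product.2 ⟨Finset.mem_range.2 h.lt_length, mem_boundedLists.2
    ⟨h.length_le, fun w hw => mem_range_wordOf_of_mem_origWords (h.1 w hw)⟩⟩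

lemma IsOrigCyclicParsing.eq_of_badSeam {L : List PWord} (h : IsOrigCyclicParsing W r L)
    (hs : BadSeam L) : ∃ a t, L = a :: (t ++ [[X]]) ∧ Bad [X] a ∧ r = 0 := by
  obtain ⟨-, -, hr⟩ := isOrigCyclicParsing_iff.1 h
  obtain ⟨hlast, hhead⟩ := hs
  rcases L with _ | ⟨a, L⟩
  · simp at hlast
  rcases List.eq_nil_or_concat' L with rfl | ⟨t, b, rfl⟩
  · rcases hhead with h | h <;> simp_all
  · simp only [List.getLastD_cons, List.getLastD_concat] at hlast hr
    subst hlast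
    exact ⟨a, t, rfl, ⟨rfl, hhead⟩, by simpa using hr⟩

def IsMergedParsing (W : PWord) (r : ℕ) (M : List PWord) : Prop :=
  IsOrigCyclicParsing W r M ∧ M.IsChain (fun u v => ¬ Bad u v) ∧ ¬ BadSeam M

def IsBlockParsing (W : PWord) (r : ℕ) (G : List (List PWord)) : Prop :=
  (∀ b ∈ G, IsBlock b) ∧ IsMergedParsing W r (G.map List.flatten)

lemma IsBlockParsing.eq_of_le {G : List (List PWord)} (h : IsBlockParsing W r G)
    (hle : (G.flatten.getLastD []).length ≤ r) :
    ∃ G₀ a, G = G₀ ++ [[[X], a]] ∧ Bad [X] a ∧ r = 2 := by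
  obtain ⟨hG, hM, -, -⟩ := h
  obtain ⟨-, -, hr⟩ := isOrigCyclicParsing_iff.1 hM
  rcases List.eq_nil_or_concat' G with rfl | ⟨G₀, b, rfl⟩
  · simp at hr
  rcases hG b (by simp) with ⟨w, rfl⟩ | ⟨u, v, ⟨rfl, hv⟩, rfl⟩
  · simp only [List.flatten_concat, List.map_append, List.map_cons, List.map_nil,
      List.getLastD_concat, List.flatten_cons, List.flatten_nil, List.append_nil] at hle hr
    omega
  · have hlast : (G₀.flatten ++ [[X], v]).getLastD [] = v := by simp
    simp only [List.flatten_concat, hlast, List.map_append, List.map_cons, List.map_nil,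
      List.getLastD_concat, List.flatten_cons, List.flatten_nil, List.append_nil,
      List.length_append, Bad.length_right ⟨rfl, hv⟩] at hle hr
    exact ⟨G₀, v, rfl, ⟨rfl, hv⟩, by simp at hr; omega⟩

lemma isBlockParsing_toBlocks {L : List PWord} (hw : ∀ w ∈ L, w ∈ origWords)
    (hflat : L.flatten = W.rotate r)
    (hr : r < (((toBlocks L).map List.flatten).getLastD []).length) (hs : ¬ BadSeam L) :
    IsBlockParsing W r (toBlocks L) := by
  have hG b (hb : b ∈ toBlocks L) : IsBlock b := isBlock_of_mem_toBlocks hb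
  refine ⟨hG, isOrigCyclicParsing_iff.2 ⟨?_, ?_, hr⟩, List.isChain_map _ |>.2 (isChain_toBlocks L),
    by rwa [badSeam_map_flatten_iff hG, flatten_toBlocks]⟩
  · simp only [List.mem_map]
    rintro _ ⟨b, hb, rfl⟩
    exact (hG b hb).flatten_mem_origWords fun w hw' =>
      hw w (flatten_toBlocks L ▸ List.mem_flatten_of_mem hb hw')
  · rw [← List.flatten_flatten, flatten_toBlocks, hflat]

/- A pair `X·XA` or `X·BA` that straddles the base point of the necklace (`BadSeam`) cannot be
grouped in place: the parsing is first read from the next cut, which makes the pair the last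
two words. Conversely, `splitParsing` reads from the previous cut when the offset no longer
fits into the last word after splitting. -/
noncomputable def mergeParsing (p : ℕ × List PWord) : ℕ × List (List PWord) :=
  if BadSeam p.2 then (p.1 + (p.2.headD []).length, toBlocks (p.2.rotate 1))
  else (p.1, toBlocks p.2)

def splitParsing (q : ℕ × List (List PWord)) : ℕ × List PWord :=
  if (q.2.flatten.getLastD []).length ≤ q.1 then
    (q.1 - (q.2.flatten.getLastD []).length, q.2.flatten.rotate (q.2.flatten.length - 1))
  else (q.1, q.2.flatten)

lemma isBlockParsing_mergeParsing {L : List PWord} (h : IsOrigCyclicParsing W r L) :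
    IsBlockParsing W (mergeParsing (r, L)).1 (mergeParsing (r, L)).2 := by
  obtain ⟨hw, hflat, hr⟩ := isOrigCyclicParsing_iff.1 h
  by_cases hs : BadSeam L
  · obtain ⟨a, t, rfl, ha, rfl⟩ := h.eq_of_badSeam hs
    rw [mergeParsing, if_pos hs]
    dsimp only
    refine isBlockParsing_toBlocks (fun w hw' => hw w (List.mem_rotate.1 hw'))
      (by rw [List.flatten_rotate_one, hflat, List.rotate_rotate]) ?_ ?_ <;>
      rw [List.rotate_one_cons_concat]
    · simp [toBlocks_append_bad t ha]
    · exact fun hs' => ha.right_ne_X (by simpa [BadSeam] using hs'.1)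
  · rw [mergeParsing, if_neg hs]
    exact isBlockParsing_toBlocks hw hflat
      (hr.trans_le (length_getLastD_le_length_getLastD_toBlocks L)) hs

lemma splitParsing_seam (G₀ : List (List PWord)) {a : PWord} (ha : Bad [X] a) :
    splitParsing (2, G₀ ++ [[[X], a]]) = (0, a :: (G₀.flatten ++ [[X]])) := by
  have hL : (G₀ ++ [[[X], a]]).flatten = (G₀.flatten ++ [[X]]) ++ [a] := by simp
  rw [splitParsing]
  dsimp only
  rw [hL, List.getLastD_concat, ha.length_right, if_pos le_rfl, List.length_append,
    List.length_singleton, Nat.add_sub_cancel, List.rotate_append_length_eq]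
  rfl

lemma isOrigCyclicParsing_splitParsing {G : List (List PWord)} (h : IsBlockParsing W r G) :
    IsOrigCyclicParsing W (splitParsing (r, G)).1 (splitParsing (r, G)).2 := by
  have hG := h.1
  obtain ⟨hw, hflat, -⟩ := isOrigCyclicParsing_iff.1 h.2.1
  have hwL : ∀ w ∈ G.flatten, w ∈ origWords := fun w hw' => by
    obtain ⟨b, hb, hwb⟩ := List.mem_flatten.1 hw'
    exact (hG b hb).mem_origWords (hw _ (List.mem_map_of_mem hb)) hwb
  rw [← List.flatten_flatten] at hflat
  by_cases hle : (G.flatten.getLastD []).length ≤ r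
  · obtain ⟨G₀, a, rfl, ha, rfl⟩ := h.eq_of_le hle
    rw [splitParsing_seam G₀ ha]
    refine isOrigCyclicParsing_iff.2 ⟨fun w hw' => hwL w ?_, ?_, ?_⟩
    · simp only [List.mem_cons, List.mem_append] at hw'
      simp only [List.flatten_append, List.flatten_cons, List.flatten_nil, List.mem_append,
        List.mem_cons, List.append_nil]
      tauto
    · rw [List.rotate_zero, List.flatten_cons, eq_comm]
      refine List.eq_append_of_rotate_eq ?_
      rw [ha.length_right, ← hflat]
      simp
    · rw [List.getLastD_cons, List.getLastD_concat]
      exact Nat.one_pos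
  · rw [splitParsing, if_neg hle]
    exact isOrigCyclicParsing_iff.2 ⟨hwL, hflat, not_le.1 hle⟩

lemma splitParsing_mergeParsing {L : List PWord} (h : IsOrigCyclicParsing W r L) :
    splitParsing (mergeParsing (r, L)) = (r, L) := by
  obtain ⟨-, -, hr⟩ := isOrigCyclicParsing_iff.1 h
  have hlen : 1 ≤ L.length := List.length_pos_iff.2 (by rintro rfl; simp at hr)
  by_cases hs : BadSeam L
  · rw [mergeParsing, if_pos hs, splitParsing]
    dsimp only
    rw [flatten_toBlocks, List.getLastD_rotate_one, if_pos (Nat.le_add_left _ _),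
      Nat.add_sub_cancel, List.rotate_rotate, List.length_rotate, Nat.add_sub_cancel' hlen,
      List.rotate_length]
  · rw [mergeParsing, if_neg hs, splitParsing]
    dsimp only
    rw [flatten_toBlocks, if_neg (not_le.2 hr)]

lemma mergeParsing_splitParsing {G : List (List PWord)} (h : IsBlockParsing W r G) :
    mergeParsing (splitParsing (r, G)) = (r, G) := by
  have hG := h.1
  have hc := (List.isChain_map List.flatten).1 h.2.2.1
  by_cases hle : (G.flatten.getLastD []).length ≤ r
  · obtain ⟨G₀, a, rfl, ha, rfl⟩ := h.eq_of_le hle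
    have hs : BadSeam (a :: (G₀.flatten ++ [[X]])) := by
      rwa [BadSeam, List.getLastD_cons, List.getLastD_concat]
    rw [splitParsing_seam G₀ ha, mergeParsing, if_pos hs]
    dsimp only
    rw [List.rotate_one_cons_concat, List.headD_cons, ha.length_right,
      ← toBlocks_flatten hG hc]
    simp
  · rw [splitParsing, if_neg hle, mergeParsing,
      if_neg (by rw [← badSeam_map_flatten_iff hG]; exact h.2.2.2), toBlocks_flatten hG hc]

lemma flatten_mergeParsing_perm (p : ℕ × List PWord) : (mergeParsing p).2.flatten.Perm p.2 := by
  unfold mergeParsing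
  split_ifs
  · simpa [flatten_toBlocks] using List.rotate_perm p.2 1
  · simp [flatten_toBlocks]

end CyclicParsings

section Values

def blocksOf (w : PWord) : Finset (List PWord) :=
  insert [w] (({[[X], [X, A]], [[X], [B, A]]} : Finset (List PWord)).filter (·.flatten = w))

lemma mem_blocksOf {w : PWord} {b : List PWord} :
    b ∈ blocksOf w ↔ IsBlock b ∧ b.flatten = w := by
  simp only [blocksOf, Finset.mem_insert, Finset.mem_filter, Finset.mem_singleton]
  constructor
  · rintro (rfl | ⟨rfl | rfl, rfl⟩)
    · exact ⟨.inl ⟨w, rfl⟩, by simp⟩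
    · exact ⟨.inr ⟨_, _, ⟨rfl, .inl rfl⟩, rfl⟩, rfl⟩
    · exact ⟨.inr ⟨_, _, ⟨rfl, .inr rfl⟩, rfl⟩, rfl⟩
  · rintro ⟨⟨w', rfl⟩ | ⟨u, v, ⟨rfl, rfl | rfl⟩, rfl⟩, rfl⟩ <;> simp

lemma mem_listPi_blocksOf {M : List PWord} {G : List (List PWord)} :
    G ∈ listPi blocksOf M ↔ (∀ b ∈ G, IsBlock b) ∧ G.map List.flatten = M := by
  simp only [mem_listPi, mem_blocksOf, List.forall₂_and_left, and_congr_right_iff]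
  intro _
  rw [← List.forall₂_map_left_iff (f := List.flatten) (R := Eq), List.forall₂_eq_eq_eq]

lemma sum_blocksOf_parseVal {w : PWord} (hw : w ∈ origWords) :
    ∑ b ∈ blocksOf w, parseVal origCoeff b =
      if w = [X, B, A] then 0 else parseVal tightCoeff [w] := by
  simp only [origWords, tightWords, List.cons_append, List.nil_append, List.mem_cons,
    List.not_mem_nil, or_false] at hw
  rcases hw with rfl | rfl | rfl | rfl | rfl | rfl | rfl | rfl | rfl <;>
    simp [blocksOf, Finset.filter_insert, Finset.filter_singleton, parseVal, origCoeff,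
      tightCoeff, wordWt]
  ring

lemma prod_sum_blocksOf_parseVal {M : List PWord} (hM : ∀ w ∈ M, w ∈ origWords) :
    (M.map fun w => ∑ b ∈ blocksOf w, parseVal origCoeff b).prod =
      if [X, B, A] ∈ M then 0 else parseVal tightCoeff M := by
  split_ifs with hx
  · exact List.prod_eq_zero
      (List.mem_map.2 ⟨_, hx, by rw [sum_blocksOf_parseVal (hM _ hx), if_pos rfl]⟩)
  · rw [parseVal_eq_prod]
    refine congrArg List.prod (List.map_congr_left fun w hw => ?_)
    rw [sum_blocksOf_parseVal (hM w hw), if_neg (by rintro rfl; exact hx hw)]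

lemma ite_isMergedParsing_eq (W : PWord) (r : ℕ) (M : List PWord) :
    (if IsMergedParsing W r M then
      (M.map fun w => ∑ b ∈ blocksOf w, parseVal origCoeff b).prod else 0) =
    if IsCyclicParsing W r M then parseVal tightCoeff M else 0 := by
  have hXBA : [X, B, A] ∉ tightWords := by decide
  by_cases hx : [X, B, A] ∈ M
  · rw [if_neg (show ¬ IsCyclicParsing W r M from fun h => hXBA (h.1.1 _ hx))]
    split_ifs with hm
    · rw [prod_sum_blocksOf_parseVal (isOrigCyclicParsing_iff.1 hm.1).1, if_pos hx]
    · rfl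
  · have hw : (∀ w ∈ M, w ∈ origWords) ↔ ∀ w ∈ M, w ∈ tightWords := by
      refine forall₂_congr fun w hw => ?_
      rw [origWords, List.mem_append, List.mem_singleton]
      exact ⟨fun h => h.resolve_right (by rintro rfl; exact hx hw), .inl⟩
    have hiff : IsMergedParsing W r M ↔ IsCyclicParsing W r M := by
      rw [IsMergedParsing, isOrigCyclicParsing_iff, isCyclicParsing_iff, TightChain, hw]
      exact ⟨fun ⟨⟨h₁, h₂, h₃⟩, h₄, h₅⟩ => ⟨⟨h₁, h₄⟩, h₂, h₃, h₅⟩,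
        fun ⟨⟨h₁, h₄⟩, h₂, h₃, h₅⟩ => ⟨⟨h₁, h₂, h₃⟩, h₄, h₅⟩⟩
    rw [if_congr hiff rfl rfl]
    split_ifs with hc
    · rw [prod_sum_blocksOf_parseVal (isOrigCyclicParsing_iff.1 (hiff.2 hc).1).1, if_neg hx]
    · rfl

end Values

section Sums

lemma sum_cyclic_eq_sum_filter (W : PWord) (P : ℕ → List PWord → Prop)
    (f : List PWord → Polynomial ℤ) :
    ∑ r ∈ Finset.range W.length, ∑ k ∈ Finset.range (W.length + 1), ∑ g : Fin k → Fin 9,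
      (if P r ((List.ofFn g).map wordOf) then f ((List.ofFn g).map wordOf) else 0) =
    ∑ p ∈ (Finset.range W.length ×ˢ boundedLists wordOf W.length).filter (fun p => P p.1 p.2),
      f p.2 := by
  rw [Finset.sum_filter, Finset.sum_product]
  exact Finset.sum_congr rfl fun r _ =>
    sum_ofFn_eq_sum_boundedLists wordOf_injective _ fun L => if P r L then f L else 0

lemma sum_isOrigCyclicParsing_eq_sum_sigma (W : PWord) :
    ∑ p ∈ (Finset.range W.length ×ˢ boundedLists wordOf W.length).filter
        (fun p => IsOrigCyclicParsing W p.1 p.2), parseVal origCoeff p.2 =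
    ∑ x ∈ ((Finset.range W.length ×ˢ boundedLists wordOf W.length).filter
        (fun p => IsMergedParsing W p.1 p.2)).sigma (fun p => listPi blocksOf p.2),
      parseVal origCoeff x.2.flatten := by
  refine Finset.sum_nbij'
    (fun p => ⟨((mergeParsing p).1, (mergeParsing p).2.map List.flatten), (mergeParsing p).2⟩)
    (fun x => splitParsing (x.1.1, x.2)) ?_ ?_ ?_ ?_ ?_
  · rintro ⟨r, L⟩ hp
    have h := isBlockParsing_mergeParsing (Finset.mem_filter.1 hp).2
    simp only [Finset.mem_sigma, Finset.mem_filter]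
    exact ⟨⟨h.2.1.mem_product, h.2⟩, mem_listPi_blocksOf.2 ⟨h.1, rfl⟩⟩
  · rintro ⟨⟨r, M⟩, G⟩ hx
    simp only [Finset.mem_sigma, Finset.mem_filter, mem_listPi_blocksOf] at hx
    obtain ⟨⟨-, hM⟩, hG, rfl⟩ := hx
    have h := isOrigCyclicParsing_splitParsing ⟨hG, hM⟩
    exact Finset.mem_filter.2 ⟨h.mem_product, h⟩
  · rintro ⟨r, L⟩ hp
    exact splitParsing_mergeParsing (Finset.mem_filter.1 hp).2
  · rintro ⟨⟨r, M⟩, G⟩ hx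
    simp only [Finset.mem_sigma, Finset.mem_filter, mem_listPi_blocksOf] at hx
    obtain ⟨⟨-, hM⟩, hG, rfl⟩ := hx
    simp only [mergeParsing_splitParsing ⟨hG, hM⟩]
  · exact fun p _ => (flatten_mergeParsing_perm p).parseVal_eq.symm

end Sums

/-- For every cyclic sentence, the value computed in the original puzzle equals the
value computed in the tight puzzle. -/
theorem origCycVal_eq_cycVal (W : PWord) : origCycVal W = cycVal W := by
  rw [origCycVal, cycVal, sum_cyclic_eq_sum_filter, sum_cyclic_eq_sum_filter,
    sum_isOrigCyclicParsing_eq_sum_sigma, Finset.sum_sigma]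
  simp only [parseVal_flatten, sum_listPi_prod]
  rw [Finset.sum_filter, Finset.sum_filter]
  exact Finset.sum_congr rfl fun p _ => ite_isMergedParsing_eq W p.1 p.2
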